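/- arXiv:1312.4784 — 3 statements merged into one kernel-verified Lean document; each statement's English description precedes it below -/
import Mathlib

section
/- Let G be a group acting on sets A and B, and let R ⊆ A × B be a G-invariant relation (i.e. R(g·a, g·b) holds if and only if R(a, b) holds) such that every a ∈ A is related to at least one b ∈ B, and for each b ∈ B the set {a ∈ A | R(a, b)} is finite. If the action of G on B has finitely many orbits, then the action of G on A has finitely many orbits. -/
/-- Let `G` act on sets `A` and `B`, and let `R ⊆ A × B` be a `G`-invariant relation such that
every `a ∈ A` is related to some `b ∈ B` and for each `b ∈ B` the set of `a ∈ A` related to `b`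
is finite. If the `G`-action on `B` has finitely many orbits, then so does the action on `A`. -/
theorem finite_orbits_of_invariant_relation {G A B : Type*} [Group G]
    [MulAction G A] [MulAction G B] (R : A → B → Prop)
    (hinv : ∀ (g : G) (a : A) (b : B), R (g • a) (g • b) ↔ R a b)
    (htotal : ∀ a : A, ∃ b : B, R a b)
    (hfin : ∀ b : B, {a : A | R a b}.Finite)
    (hB : Finite (Quotient (MulAction.orbitRel G B))) :
    Finite (Quotient (MulAction.orbitRel G A)) := by
  have : ∀ q : Quotient (MulAction.orbitRel G B),
      Finite {a : A // R a (Quotient.out q)} := fun q => (hfin _).to_subtype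
  let f : (Σ q : Quotient (MulAction.orbitRel G B), {a : A // R a (Quotient.out q)}) →
      Quotient (MulAction.orbitRel G A) := fun p => ⟦p.2.1⟧
  apply Finite.of_surjective f
  intro qa
  obtain ⟨a, rfl⟩ := Quotient.exists_rep qa
  obtain ⟨b, hb⟩ := htotal a
  obtain ⟨g, hg⟩ : (⟦b⟧ : Quotient (MulAction.orbitRel G B)).out ∈ MulAction.orbit G b :=
    Quotient.mk_out (s := MulAction.orbitRel G B) b
  refine ⟨⟨⟦b⟧, ⟨g • a, ?_⟩⟩, ?_⟩
  · show R (g • a) (⟦b⟧ : Quotient (MulAction.orbitRel G B)).out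
    rw [← hg]; exact (hinv g a b).mpr hb
  · exact Quotient.sound ⟨g, rfl⟩
end

section
/- Let p be a prime number, let B be a ℚ-algebra equipped with a ring anti-involution x ↦ x* (an additive involutive map satisfying (xy)* = y*·x* and 1* = 1), and let O' ⊆ B be a subring that is finitely generated as a ℤ-module. Assume that for every x ∈ O' there exists a positive integer N prime to p such that N·x* ∈ O'. Then there exists a subring O ⊆ O' stable under the involution (x ∈ O implies x* ∈ O) such that for every x ∈ O' there exists a positive integer N prime to p with N·x ∈ O. -/
/-!
If `e₁, …, e_r` generate `O'` additively, choose one `N` prime to `p` with `N • σ eᵢ ∈ O'` for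
all `i` (a product of the individual ones). Then `O` is the subring generated by the `N • eᵢ` and
the `N • σ eᵢ`. As `σ` is an involution fixing integers, it permutes this generating set; being a
ring homomorphism `B →+* Bᵐᵒᵖ`, it then preserves the generated subring. Finally `N • O' ⊆ O`
because the `eᵢ` generate `O'` additively.
-/

open MulOpposite

def RingHom.ofAntiMul {R : Type*} [Ring R] (σ : R → R) (hadd : ∀ x y, σ (x + y) = σ x + σ y)
    (hmul : ∀ x y, σ (x * y) = σ y * σ x) (hone : σ 1 = 1) : R →+* Rᵐᵒᵖ :=
  RingHom.mk' (⟨⟨fun x => MulOpposite.op (σ x), congrArg MulOpposite.op hone⟩,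
    fun x y => congrArg MulOpposite.op (hmul x y)⟩ : R →* Rᵐᵒᵖ)
    fun x y => congrArg MulOpposite.op (hadd x y)

theorem RingHom.unop_map_natCast_mul {R : Type*} [Ring R] (τ : R →+* Rᵐᵒᵖ) (n : ℕ) (x : R) :
    (τ (n * x)).unop = n * (τ x).unop := by
  rw [map_mul, unop_mul, map_natCast, unop_natCast, Nat.cast_comm]

theorem Subring.unop_map_mem_closure {R : Type*} [Ring R] (τ : R →+* Rᵐᵒᵖ) {s : Set R}
    (hs : ∀ x ∈ s, (τ x).unop ∈ s) {x : R} (hx : x ∈ closure s) : (τ x).unop ∈ closure s :=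
  (closure_le (t := (closure s).op.comap τ)).mpr (fun y hy => subset_closure (hs y hy)) hx

theorem AddSubgroup.mul_mem_of_mem_closure {R : Type*} [NonUnitalNonAssocRing R] (n : R)
    {s : Set R} {O : AddSubgroup R} (hs : ∀ e ∈ s, n * e ∈ O) {x : R} (hx : x ∈ closure s) :
    n * x ∈ O :=
  (closure_le (K := O.comap (AddMonoidHom.mulLeft n))).mpr hs hx

theorem Nat.exists_forall_not_dvd_of_mul_closed {ι : Type*} {p : ℕ} (hp : p.Prime)
    (P : ι → ℕ → Prop) (hP : ∀ i n m, P i n → P i (m * n)) (s : Finset ι)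
    (h : ∀ i ∈ s, ∃ n, 0 < n ∧ ¬p ∣ n ∧ P i n) : ∃ N, 0 < N ∧ ¬p ∣ N ∧ ∀ i ∈ s, P i N := by
  classical
  induction s using Finset.induction_on with
  | empty => exact ⟨1, one_pos, hp.not_dvd_one, by simp⟩
  | insert i s _ ih =>
    obtain ⟨n, hn0, hnp, hn⟩ := h i (Finset.mem_insert_self i s)
    obtain ⟨N, hN0, hNp, hN⟩ := ih fun j hj => h j (Finset.mem_insert_of_mem hj)
    refine ⟨n * N, Nat.mul_pos hn0 hN0, fun hdvd => (hp.dvd_mul.mp hdvd).elim hnp hNp, ?_⟩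
    rintro j hj
    rcases Finset.mem_insert.mp hj with rfl | hj
    · exact mul_comm N n ▸ hP j n N hn
    · exact hP j N n (hN j hj)

theorem exists_involution_stable_order_general {B : Type*} [Ring B]
    (p : ℕ) (hp : p.Prime) (σ : B → B)
    (hadd : ∀ x y, σ (x + y) = σ x + σ y)
    (hmul : ∀ x y, σ (x * y) = σ y * σ x)
    (hone : σ 1 = 1)
    (hinvol : ∀ x, σ (σ x) = x)
    (O' : Subring B) (hfg : O'.toAddSubgroup.FG)
    (hstar : ∀ x ∈ O', ∃ N : ℕ, 0 < N ∧ ¬ p ∣ N ∧ (N : B) * σ x ∈ O') :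
    ∃ O : Subring B, O ≤ O' ∧ (∀ x ∈ O, σ x ∈ O) ∧
      ∀ x ∈ O', ∃ N : ℕ, 0 < N ∧ ¬ p ∣ N ∧ (N : B) * x ∈ O := by
  obtain ⟨s, hs⟩ := hfg
  have hsO' : ∀ e ∈ s, e ∈ O' := fun e he => by
    rw [← Subring.mem_toAddSubgroup, ← hs]; exact AddSubgroup.subset_closure he
  obtain ⟨N, hN0, hNp, hNσ⟩ := Nat.exists_forall_not_dvd_of_mul_closed hp
    (fun e n => (n : B) * σ e ∈ O')
    (fun _ _ m h => by rw [Nat.cast_mul, mul_assoc]; exact O'.mul_mem (natCast_mem O' m) h)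
    s fun e he => hstar e (hsO' e he)
  set t : Set B := (N * ·) '' (s ∪ σ '' s)
  have ht : ∀ x ∈ t, σ x ∈ t := by
    rintro _ ⟨y, hy, rfl⟩
    refine ⟨σ y, ?_, (RingHom.ofAntiMul σ hadd hmul hone |>.unop_map_natCast_mul N y).symm⟩
    rcases hy with hy | ⟨e, he, rfl⟩
    · exact Or.inr ⟨y, hy, rfl⟩
    · exact Or.inl ((hinvol e).symm ▸ he)
  refine ⟨Subring.closure t, Subring.closure_le.mpr ?_,
    fun _ => Subring.unop_map_mem_closure (RingHom.ofAntiMul σ hadd hmul hone) ht,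
    fun x hx => ⟨N, hN0, hNp, ?_⟩⟩
  · rintro _ ⟨e, he | ⟨e, he, rfl⟩, rfl⟩
    · exact O'.mul_mem (natCast_mem O' N) (hsO' e he)
    · exact hNσ e he
  · rw [← Subring.mem_toAddSubgroup, ← hs] at hx
    exact AddSubgroup.mul_mem_of_mem_closure (O := (Subring.closure t).toAddSubgroup) _
      (fun e he => Subring.subset_closure ⟨e, Or.inl he, rfl⟩) hx

/-- Let `B` be a `ℚ`-algebra with a ring anti-involution `σ`, and let `O'` be a subring of `B`
which is finitely generated as a `ℤ`-module. If for every `x ∈ O'` there is a positive integer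
`N` prime to `p` with `N • σ x ∈ O'`, then there is a subring `O ⊆ O'` stable under `σ` such
that every `x ∈ O'` satisfies `N • x ∈ O` for some positive integer `N` prime to `p`. -/
theorem exists_involution_stable_order {B : Type*} [Ring B] [Algebra ℚ B]
    (p : ℕ) (hp : p.Prime) (σ : B → B)
    (hadd : ∀ x y, σ (x + y) = σ x + σ y)
    (hmul : ∀ x y, σ (x * y) = σ y * σ x)
    (hone : σ 1 = 1)
    (hinvol : ∀ x, σ (σ x) = x)
    (O' : Subring B) (hfg : O'.toAddSubgroup.FG)
    (hstar : ∀ x ∈ O', ∃ N : ℕ, 0 < N ∧ ¬ p ∣ N ∧ (N : B) * σ x ∈ O') :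
    ∃ O : Subring B, O ≤ O' ∧ (∀ x ∈ O, σ x ∈ O) ∧
      ∀ x ∈ O', ∃ N : ℕ, 0 < N ∧ ¬ p ∣ N ∧ (N : B) * x ∈ O :=
  exists_involution_stable_order_general p hp σ hadd hmul hone hinvol O' hfg hstar
end

section
/- Let G be a group acting on a set I with finitely many orbits, and let R be a G-invariant binary relation on I (i.e. R(g·α, g·β) holds if and only if R(α, β) holds) such that for every α ∈ I the set {β ∈ I | R(α, β)} is finite. Then: (i) there exists an integer N such that every finite subset A ⊆ I satisfying R(α, β) for all α, β ∈ A has at most N elements; and (ii) for every s ≥ 1, the induced action of G on the set of s-element subsets A ⊆ I satisfying R(α, β) for all α, β ∈ A has finitely many orbits. -/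
open Pointwise

/-- Let `G` act on a set `I` with finitely many orbits and let `R` be a `G`-invariant binary
relation on `I` such that each `α` is related to only finitely many `β`. Then (i) there is a
uniform bound `N` on the size of finite subsets of `I` on which `R` holds for all pairs, and
(ii) for every `s ≥ 1`, the induced `G`-action on the `s`-element subsets of `I` on which `R`
holds for all pairs has finitely many orbits. -/
theorem clique_bound_and_finite_orbits {G I : Type*} [Group G] [MulAction G I]
    (hI : Finite (Quotient (MulAction.orbitRel G I)))
    (R : I → I → Prop)
    (hinv : ∀ (g : G) (α β : I), R (g • α) (g • β) ↔ R α β)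
    (hfin : ∀ α : I, {β : I | R α β}.Finite) :
    (∃ N : ℕ, ∀ A : Finset I, (∀ α ∈ A, ∀ β ∈ A, R α β) → A.card ≤ N) ∧
      ∀ s : ℕ, 1 ≤ s →
        ∃ 𝒜 : Set (Set I), 𝒜.Finite ∧
          ∀ A : Set I, A.Finite → A.ncard = s → (∀ α ∈ A, ∀ β ∈ A, R α β) →
            ∃ g : G, g • A ∈ 𝒜 := by
  classical
  set T : Set I := ⋃ q : Quotient (MulAction.orbitRel G I), {β | R q.out β} with hT
  have hTfin : T.Finite := Set.finite_iUnion (fun q => hfin q.out)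
  -- core: any nonempty clique can be translated into T
  have core : ∀ A : Set I, A.Nonempty → (∀ α ∈ A, ∀ β ∈ A, R α β) →
      ∃ g : G, g • A ⊆ T := by
    intro A ⟨α, hα⟩ hcl
    have hrel : (Quotient.mk (MulAction.orbitRel G I) α).out ∈ MulAction.orbit G α := by
      have := Quotient.mk_out (s := MulAction.orbitRel G I) α
      exact this
    obtain ⟨g, hg⟩ := MulAction.mem_orbit_iff.mp hrel
    refine ⟨g, ?_⟩
    rintro x ⟨β, hβ, rfl⟩
    refine Set.mem_iUnion.mpr ⟨Quotient.mk (MulAction.orbitRel G I) α, ?_⟩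
    show R (Quotient.mk (MulAction.orbitRel G I) α).out (g • β)
    rw [← hg, hinv]
    exact hcl α hα β hβ
  refine ⟨⟨T.ncard, ?_⟩, ?_⟩
  · intro A hcl
    rcases A.eq_empty_or_nonempty with rfl | hne
    · simp
    · obtain ⟨g, hg⟩ := core (A : Set I) (by exact_mod_cast hne)
        (by intro a ha b hb; exact hcl a (by exact_mod_cast ha) b (by exact_mod_cast hb))
      have h1 : (g • (A : Set I)).ncard = A.card := by
        rw [← Set.image_smul, Set.ncard_image_of_injective _ (MulAction.injective g)]
        simp [Set.ncard_coe_finset]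
      calc A.card = (g • (A : Set I)).ncard := h1.symm
        _ ≤ T.ncard := Set.ncard_le_ncard hg hTfin
  · intro s hs
    refine ⟨{B | B ⊆ T}, hTfin.finite_subsets, ?_⟩
    intro A hAfin hAcard hcl
    have hne : A.Nonempty := Set.nonempty_of_ncard_ne_zero (by omega)
    exact core A hne hcl
end
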